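/- arXiv:1005.3659 — 2 statements merged into one kernel-verified Lean document; each statement's English description precedes it below -/
import Mathlib

section
/- Let β ≥ 0 and let ν be a measure on (0,∞) with ∫_{(0,∞)} (x ∧ x²) ν(dx) < ∞, and set ψ₀(λ) = βλ² + ∫_{(0,∞)} (e^{-λx} - 1 + λx) ν(dx) for λ ≥ 0. Then ∫_0^1 r^{-2} |log r| ψ₀(r) dr < ∞ if and only if ∫_{[1,∞)} x (log x)² ν(dx) < ∞. -/
/-!
By Tonelli the left-hand integral equals `β + ∫ K dν`, where
`K x = ∫₀¹ r⁻² |log r| (e^{-rx} - 1 + rx) dr` (`logKernel` below). Since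
`e^{-u} - 1 + u ≤ min u u²`, splitting the `r`-integral at `r = 1/x` gives `K x ≤ x²` for `x ≤ 1`
and `K x ≤ 2x + x log² x` for `x ≥ 1`; since `e^{-u} - 1 + u ≥ u / 2` for `u ≥ 2`, restricting it
to `r ≥ 2/x` gives `K x ≥ x log² (x/2) / 4`. So `K` is comparable to
`min x x² + x log² x · 1_{x ≥ 1}`, and the first summand is `ν`-integrable by hypothesis.
-/

open MeasureTheory Real Set
open scoped ENNReal

theorem MeasureTheory.sFinite_of_lintegral_ne_top {α : Type*} [MeasurableSpace α]
    {μ : Measure α} {f : α → ℝ≥0∞} (hf : AEMeasurable f μ) (hf0 : ∀ᵐ x ∂μ, f x ≠ 0)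
    (hfi : ∫⁻ x, f x ∂μ ≠ ∞) : SFinite μ :=
  have : IsFiniteMeasure (μ.withDensity f) := isFiniteMeasure_withDensity hfi
  sFinite_of_absolutelyContinuous (withDensity_absolutelyContinuous' hf hf0)

namespace XLogXSquared

noncomputable def expRem (u : ℝ) : ℝ := exp (-u) - 1 + u

@[fun_prop]
theorem continuous_expRem : Continuous expRem := by
  unfold expRem; fun_prop

theorem expRem_nonneg (u : ℝ) : 0 ≤ expRem u := by
  have := add_one_le_exp (-u)
  unfold expRem; linarith

theorem expRem_le_self {u : ℝ} (hu : 0 ≤ u) : expRem u ≤ u := by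
  have : exp (-u) ≤ 1 := exp_le_one_iff.mpr (by linarith)
  unfold expRem; linarith

theorem half_le_expRem {u : ℝ} (hu : 2 ≤ u) : u / 2 ≤ expRem u := by
  have := exp_nonneg (-u)
  unfold expRem; linarith

theorem expRem_le_sq {u : ℝ} (hu : 0 ≤ u) : expRem u ≤ u ^ 2 := by
  rcases le_or_gt u 1 with hu1 | hu1
  · have h := abs_exp_sub_one_sub_id_le (x := -u) (by rw [abs_neg, abs_of_nonneg hu]; exact hu1)
    have := (abs_le.mp h).2
    unfold expRem; nlinarith
  · nlinarith [expRem_le_self hu]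

theorem expRem_mul_le_min {r x : ℝ} (hr0 : 0 ≤ r) (hr1 : r ≤ 1) (hx : 0 ≤ x) :
    expRem (r * x) ≤ min x (x ^ 2) := by
  have hrx : r * x ≤ x := mul_le_of_le_one_left hx hr1
  exact le_min ((expRem_le_self (by positivity)).trans hrx)
    ((expRem_le_sq (by positivity)).trans (pow_le_pow_left₀ (by positivity) hrx 2))

theorem lintegral_neg_log {a : ℝ} (ha0 : 0 ≤ a) (ha1 : a ≤ 1) :
    ∫⁻ r in Ioc 0 a, ENNReal.ofReal (-log r) = ENNReal.ofReal (a - a * log a) := by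
  have hint : IntegrableOn (fun r => -log r) (Ioc 0 a) :=
    (intervalIntegrable_iff_integrableOn_Ioc_of_le ha0).1
      (intervalIntegral.intervalIntegrable_log').neg
  have hnonneg : 0 ≤ᵐ[volume.restrict (Ioc 0 a)] fun r => -log r :=
    (ae_restrict_iff' measurableSet_Ioc).2 <| .of_forall fun r hr =>
      neg_nonneg.2 (log_nonpos hr.1.le (hr.2.trans ha1))
  rw [← ofReal_integral_eq_lintegral_ofReal hint hnonneg, ← intervalIntegral.integral_of_le ha0,
    intervalIntegral.integral_neg, integral_log]
  congr 1
  simp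

theorem lintegral_neg_log_div {a : ℝ} (ha0 : 0 < a) (ha1 : a ≤ 1) :
    ∫⁻ r in Ioc a 1, ENNReal.ofReal (-log r / r) = ENNReal.ofReal (log a ^ 2 / 2) := by
  have hpos : ∀ r ∈ uIcc a 1, 0 < r := fun r hr => ha0.trans_le (uIcc_of_le ha1 ▸ hr).1
  have hcont : ContinuousOn (fun r => -log r / r) (uIcc a 1) :=
    ((continuousOn_log.mono fun r hr => (hpos r hr).ne').neg.div continuousOn_id)
      fun r hr => (hpos r hr).ne'
  have hderiv : ∀ r ∈ uIcc a 1, HasDerivAt (fun t => -(log t ^ 2 / 2)) (-log r / r) r := by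
    intro r hr
    refine ((((hasDerivAt_log (hpos r hr).ne').pow 2).div_const 2).neg).congr_deriv ?_
    field_simp
    ring
  have hnonneg : 0 ≤ᵐ[volume.restrict (Ioc a 1)] fun r => -log r / r :=
    (ae_restrict_iff' measurableSet_Ioc).2 <| .of_forall fun r hr =>
      div_nonneg (neg_nonneg.2 (log_nonpos (ha0.trans hr.1).le hr.2)) (ha0.trans hr.1).le
  rw [← ofReal_integral_eq_lintegral_ofReal
    ((intervalIntegrable_iff_integrableOn_Ioc_of_le ha1).1 hcont.intervalIntegrable) hnonneg,
    ← intervalIntegral.integral_of_le ha1,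
    intervalIntegral.integral_eq_sub_of_hasDerivAt hderiv hcont.intervalIntegrable]
  simp

noncomputable def logKernel (x : ℝ) : ℝ≥0∞ :=
  ∫⁻ r in Ioc 0 1, ENNReal.ofReal (-log r / r ^ 2 * expRem (r * x))

section kernelBounds

variable {r x : ℝ} (hr : r ∈ Ioc (0 : ℝ) 1)
include hr

theorem neg_log_div_sq_nonneg : 0 ≤ -log r / r ^ 2 :=
  div_nonneg (neg_nonneg.2 (log_nonpos hr.1.le hr.2)) (sq_nonneg r)

theorem kernel_le_sq (hx : 0 ≤ x) : -log r / r ^ 2 * expRem (r * x) ≤ x ^ 2 * -log r := by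
  calc _ ≤ -log r / r ^ 2 * (r * x) ^ 2 := mul_le_mul_of_nonneg_left
        (expRem_le_sq (mul_nonneg hr.1.le hx)) (neg_log_div_sq_nonneg hr)
    _ = x ^ 2 * -log r := by field_simp [hr.1.ne']

theorem kernel_le_mul (hx : 0 ≤ x) : -log r / r ^ 2 * expRem (r * x) ≤ x * (-log r / r) := by
  calc _ ≤ -log r / r ^ 2 * (r * x) := mul_le_mul_of_nonneg_left
        (expRem_le_self (mul_nonneg hr.1.le hx)) (neg_log_div_sq_nonneg hr)
    _ = x * (-log r / r) := by field_simp [hr.1.ne']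

theorem half_mul_le_kernel (hrx : 2 ≤ r * x) :
    x / 2 * (-log r / r) ≤ -log r / r ^ 2 * expRem (r * x) := by
  calc x / 2 * (-log r / r) = -log r / r ^ 2 * (r * x / 2) := by field_simp [hr.1.ne']
    _ ≤ _ := mul_le_mul_of_nonneg_left (half_le_expRem hrx) (neg_log_div_sq_nonneg hr)

end kernelBounds

theorem logKernel_le {a x : ℝ} (ha0 : 0 < a) (ha1 : a ≤ 1) (hx : 0 ≤ x) :
    logKernel x ≤
      ENNReal.ofReal (x ^ 2 * (a - a * log a)) + ENNReal.ofReal (x * (log a ^ 2 / 2)) := by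
  rw [logKernel, ← Ioc_union_Ioc_eq_Ioc ha0.le ha1,
    lintegral_union measurableSet_Ioc (Ioc_disjoint_Ioc_of_le le_rfl)]
  gcongr ?_ + ?_
  · calc _ ≤ ∫⁻ r in Ioc 0 a, ENNReal.ofReal (x ^ 2) * ENNReal.ofReal (-log r) :=
          setLIntegral_mono' measurableSet_Ioc fun r hr => by
            rw [← ENNReal.ofReal_mul (sq_nonneg x)]
            exact ENNReal.ofReal_le_ofReal (kernel_le_sq ⟨hr.1, hr.2.trans ha1⟩ hx)
      _ = _ := by
          rw [lintegral_const_mul' _ _ ENNReal.ofReal_ne_top, lintegral_neg_log ha0.le ha1,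
            ← ENNReal.ofReal_mul (sq_nonneg x)]
  · calc _ ≤ ∫⁻ r in Ioc a 1, ENNReal.ofReal x * ENNReal.ofReal (-log r / r) :=
          setLIntegral_mono' measurableSet_Ioc fun r hr => by
            rw [← ENNReal.ofReal_mul hx]
            exact ENNReal.ofReal_le_ofReal (kernel_le_mul ⟨ha0.trans hr.1, hr.2⟩ hx)
      _ = _ := by
          rw [lintegral_const_mul' _ _ ENNReal.ofReal_ne_top, lintegral_neg_log_div ha0 ha1,
            ← ENNReal.ofReal_mul hx]

theorem le_logKernel {a x : ℝ} (ha0 : 0 < a) (ha1 : a ≤ 1) (hax : 2 ≤ a * x) :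
    ENNReal.ofReal (x / 2 * (log a ^ 2 / 2)) ≤ logKernel x := by
  have hx : 0 ≤ x / 2 := by nlinarith
  calc ENNReal.ofReal (x / 2 * (log a ^ 2 / 2))
      = ∫⁻ r in Ioc a 1, ENNReal.ofReal (x / 2) * ENNReal.ofReal (-log r / r) := by
        rw [lintegral_const_mul' _ _ ENNReal.ofReal_ne_top, lintegral_neg_log_div ha0 ha1,
          ← ENNReal.ofReal_mul hx]
    _ ≤ ∫⁻ r in Ioc a 1, ENNReal.ofReal (-log r / r ^ 2 * expRem (r * x)) :=
        setLIntegral_mono' measurableSet_Ioc fun r hr => by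
          rw [← ENNReal.ofReal_mul hx]
          refine ENNReal.ofReal_le_ofReal (half_mul_le_kernel ⟨ha0.trans hr.1, hr.2⟩ ?_)
          nlinarith [hr.1]
    _ ≤ logKernel x := lintegral_mono_set (Ioc_subset_Ioc_left ha0.le)

theorem logKernel_le_min_add_indicator {x : ℝ} (hx : 0 ≤ x) :
    logKernel x ≤ 2 * ENNReal.ofReal (min x (x ^ 2)) +
      (Ici 1).indicator (fun x => ENNReal.ofReal (x * log x ^ 2)) x := by
  rcases le_or_gt x 1 with hx1 | hx1
  · calc logKernel x ≤ ENNReal.ofReal (x ^ 2) := by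
          simpa using logKernel_le one_pos le_rfl hx
      _ ≤ _ := by
          rw [min_eq_right (by nlinarith)]
          exact le_add_right (le_mul_of_one_le_left' one_le_two)
  · have hx0 : 0 < x := one_pos.trans hx1
    have hlog : 0 ≤ log x := log_nonneg hx1.le
    calc logKernel x
        ≤ ENNReal.ofReal (x ^ 2 * (x⁻¹ - x⁻¹ * log x⁻¹)) + ENNReal.ofReal (x * (log x⁻¹ ^ 2 / 2)) :=
          logKernel_le (inv_pos.2 hx0) (inv_le_one_of_one_le₀ hx1.le) hx
      _ = ENNReal.ofReal (x + x * log x) + ENNReal.ofReal (x * log x ^ 2 / 2) := by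
          rw [log_inv]
          congr 2
          · field_simp
            ring
          · ring
      _ = ENNReal.ofReal (x + x * log x + x * log x ^ 2 / 2) :=
          (ENNReal.ofReal_add (by positivity) (by positivity)).symm
      _ ≤ ENNReal.ofReal (2 * x + x * log x ^ 2) :=
          ENNReal.ofReal_le_ofReal (by nlinarith [sq_nonneg (log x - 1)])
      _ = _ := by
          rw [ENNReal.ofReal_add (by positivity) (by positivity), ENNReal.ofReal_mul zero_le_two,
            ENNReal.ofReal_ofNat, min_eq_left (by nlinarith), indicator_of_mem (mem_Ici.2 hx1.le)]

theorem mul_log_sq_le_logKernel {x : ℝ} (hx : 1 ≤ x) :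
    ENNReal.ofReal (x * log x ^ 2) ≤ 2 * ENNReal.ofReal x + 8 * logKernel x := by
  have hlog : 0 ≤ log x := log_nonneg hx
  have hlog2 : log 2 < 1 := log_two_lt_d9.trans (by norm_num)
  rcases le_or_gt x 2 with hx2 | hx2
  · have : log x ≤ log 2 := log_le_log (by positivity) hx2
    rw [← ENNReal.ofReal_ofNat 2, ← ENNReal.ofReal_mul zero_le_two]
    exact le_add_right (ENNReal.ofReal_le_ofReal (by nlinarith))
  · have hx0 : 0 < x := by positivity
    have hkernel := le_logKernel (x := x) (a := 2 / x) (by positivity)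
      ((div_le_one hx0).2 hx2.le) (div_mul_cancel₀ 2 hx0.ne').ge
    rw [log_div two_ne_zero hx0.ne'] at hkernel
    have hlog_sq : log x ^ 2 ≤ 2 + 2 * (log 2 - log x) ^ 2 := by
      nlinarith [log_le_log two_pos hx2.le, sq_nonneg (log x - log 2 - 1)]
    calc ENNReal.ofReal (x * log x ^ 2)
        ≤ ENNReal.ofReal (2 * x + 8 * (x / 2 * ((log 2 - log x) ^ 2 / 2))) :=
          ENNReal.ofReal_le_ofReal (by nlinarith [mul_le_mul_of_nonneg_left hlog_sq hx0.le])
      _ ≤ 2 * ENNReal.ofReal x + 8 * logKernel x := by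
          rw [ENNReal.ofReal_add (by positivity) (by positivity), ENNReal.ofReal_mul zero_le_two,
            ENNReal.ofReal_mul (by norm_num), ENNReal.ofReal_ofNat, ENNReal.ofReal_ofNat]
          gcongr

theorem ae_pos_of_measure_Iic_eq_zero {ν : Measure ℝ} (hν0 : ν (Iic 0) = 0) : ∀ᵐ x ∂ν, 0 < x :=
  measure_mono_null (fun x (hx : ¬0 < x) => not_lt.1 hx) hν0

section momentCondition

variable {ν : Measure ℝ} (hν0 : ν (Iic 0) = 0)
  (hν : ∫⁻ x, ENNReal.ofReal (min x (x ^ 2)) ∂ν ≠ ⊤)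
include hν0 hν

theorem integrable_expRem_mul {r : ℝ} (hr0 : 0 ≤ r) (hr1 : r ≤ 1) :
    Integrable (fun x => expRem (r * x)) ν := by
  refine ⟨by fun_prop, ?_⟩
  rw [hasFiniteIntegral_iff_ofReal (.of_forall fun x => expRem_nonneg _)]
  refine (ne_top_of_le_ne_top hν (lintegral_mono_ae ?_)).lt_top
  filter_upwards [ae_pos_of_measure_Iic_eq_zero hν0] with x hx
  exact ENNReal.ofReal_le_ofReal (expRem_mul_le_min hr0 hr1 hx.le)

theorem sFinite_of_moment : SFinite ν :=
  sFinite_of_lintegral_ne_top (by fun_prop) (by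
    filter_upwards [ae_pos_of_measure_Iic_eq_zero hν0] with x hx
    exact (ENNReal.ofReal_pos.2 (lt_min hx (by positivity))).ne') hν

theorem lintegral_logKernel_ne_top_iff :
    ∫⁻ x, logKernel x ∂ν ≠ ⊤ ↔ ∫⁻ x in Ici 1, ENNReal.ofReal (x * log x ^ 2) ∂ν ≠ ⊤ := by
  have hmin : ∫⁻ x, 2 * ENNReal.ofReal (min x (x ^ 2)) ∂ν ≠ ⊤ := by
    rw [lintegral_const_mul' _ _ ENNReal.ofNat_ne_top]
    exact ENNReal.mul_ne_top ENNReal.ofNat_ne_top hν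
  constructor
  · intro hK
    refine ne_top_of_le_ne_top (b := ∫⁻ x, 2 * ENNReal.ofReal (min x (x ^ 2)) + 8 * logKernel x ∂ν)
      ?_ ?_
    · rw [lintegral_add_left (by fun_prop), lintegral_const_mul' 8 _ ENNReal.ofNat_ne_top]
      exact ENNReal.add_ne_top.2 ⟨hmin, ENNReal.mul_ne_top ENNReal.ofNat_ne_top hK⟩
    · refine (setLIntegral_mono' measurableSet_Ici fun x hx => ?_).trans
        (setLIntegral_le_lintegral _ _)
      rw [min_eq_left (by nlinarith [mem_Ici.1 hx])]
      exact mul_log_sq_le_logKernel hx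
  · intro hmoment
    refine ne_top_of_le_ne_top (b := ∫⁻ x, 2 * ENNReal.ofReal (min x (x ^ 2)) +
      (Ici 1).indicator (fun x => ENNReal.ofReal (x * log x ^ 2)) x ∂ν) ?_ ?_
    · rw [lintegral_add_left (by fun_prop), lintegral_indicator measurableSet_Ici]
      exact ENNReal.add_ne_top.2 ⟨hmin, hmoment⟩
    · refine lintegral_mono_ae ?_
      filter_upwards [ae_pos_of_measure_Iic_eq_zero hν0] with x hx
      exact logKernel_le_min_add_indicator hx.le

theorem lintegral_log_mul_psi_eq {β : ℝ} (hβ : 0 ≤ β) {ψ₀ : ℝ → ℝ}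
    (hψ₀ : ∀ l : ℝ, ψ₀ l = β * l ^ 2 + ∫ x, (exp (-l * x) - 1 + l * x) ∂ν) :
    ∫⁻ r in Ioc 0 1, ENNReal.ofReal (|log r| * ψ₀ r / r ^ 2) =
      ENNReal.ofReal β + ∫⁻ x, logKernel x ∂ν := by
  have := sFinite_of_moment hν0 hν
  have hpointwise : ∀ r ∈ Ioc (0 : ℝ) 1, ENNReal.ofReal (|log r| * ψ₀ r / r ^ 2) =
      ENNReal.ofReal β * ENNReal.ofReal (-log r) +
        ∫⁻ x, ENNReal.ofReal (-log r / r ^ 2 * expRem (r * x)) ∂ν := by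
    intro r hr
    have hc := neg_log_div_sq_nonneg hr
    have hlog := log_nonpos hr.1.le hr.2
    have hψ : ψ₀ r = β * r ^ 2 + ∫ x, expRem (r * x) ∂ν := by simp only [hψ₀, expRem, neg_mul]
    have hsplit : |log r| * ψ₀ r / r ^ 2 =
        β * -log r + ∫ x, -log r / r ^ 2 * expRem (r * x) ∂ν := by
      rw [integral_const_mul, hψ, abs_of_nonpos hlog]
      field_simp [hr.1.ne']
      ring
    have hint := (integrable_expRem_mul hν0 hν hr.1.le hr.2).const_mul (-log r / r ^ 2)
    have hint_nonneg : ∀ x, 0 ≤ -log r / r ^ 2 * expRem (r * x) :=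
      fun x => mul_nonneg hc (expRem_nonneg _)
    rw [hsplit, ENNReal.ofReal_add (mul_nonneg hβ (by linarith)) (integral_nonneg hint_nonneg),
      ENNReal.ofReal_mul hβ, ofReal_integral_eq_lintegral_ofReal hint (.of_forall hint_nonneg)]
  unfold logKernel
  rw [setLIntegral_congr_fun measurableSet_Ioc hpointwise, lintegral_add_left (by fun_prop),
    lintegral_const_mul' _ _ ENNReal.ofReal_ne_top, lintegral_neg_log zero_le_one le_rfl,
    lintegral_lintegral_swap (by fun_prop)]
  simp

end momentCondition

end XLogXSquared

open XLogXSquared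

/-- With `ψ₀(λ) = βλ² + ∫_{(0,∞)} (e^{-λx} - 1 + λx) ν(dx)`,
`∫_0^1 r^{-2} |log r| ψ₀(r) dr < ∞` if and only if
`∫_{[1,∞)} x (log x)² ν(dx) < ∞`. -/
theorem xlogx_squared_moment_iff
    (β : ℝ) (hβ : 0 ≤ β)
    (ν : Measure ℝ) (hν0 : ν (Set.Iic 0) = 0)
    (hν : ∫⁻ x, ENNReal.ofReal (min x (x ^ 2)) ∂ν ≠ ⊤)
    (ψ₀ : ℝ → ℝ)
    (hψ₀ : ∀ l : ℝ, ψ₀ l = β * l ^ 2 + ∫ x, (Real.exp (-l * x) - 1 + l * x) ∂ν) :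
    (∫⁻ r in Set.Ioc (0 : ℝ) 1, ENNReal.ofReal (|Real.log r| * ψ₀ r / r ^ 2) ≠ ⊤) ↔
    (∫⁻ x in Set.Ici (1 : ℝ), ENNReal.ofReal (x * Real.log x ^ 2) ∂ν ≠ ⊤) := by
  rw [lintegral_log_mul_psi_eq hν0 hν hβ hψ₀, ENNReal.add_ne_top,
    and_iff_right ENNReal.ofReal_ne_top]
  exact lintegral_logKernel_ne_top_iff hν0 hν
end

section
/- Let ψ be a branching mechanism with parameters α > 0, β = 0 and Lévy measure ν, assume additionally ∫_{(0,∞)} (x ∧ 1) ν(dx) < ∞ (so that ψ corresponds to a spectrally positive Lévy process of bounded variation), assume ψ(λ) → ∞ as λ → ∞, and let λ* > 0 be the unique positive root of ψ. Then ∫_{λ*+1}^∞ (∫_{λ*}^ξ ψ(u) du)^{-1/2} dξ = ∞; that is, condition (A3) fails. -/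
/-!
In the bounded-variation case `∫ x ν(dx) < ∞`, so the bound `e^{-y} - 1 + y ≤ y`
(for `y ≥ 0`) gives `ψ(λ) ≤ (∫ x ν(dx) - α) λ`: the mechanism grows at most linearly.
Hence `∫_{λ*}^ξ ψ = O(ξ²)`, the integrand of (A3) is bounded below by a multiple of
`ξ⁻¹`, and the integral diverges logarithmically.
-/

open MeasureTheory Real Set Filter

theorem lintegral_Ici_ofReal_inv_eq_top {a : ℝ} (ha : 0 < a) :
    ∫⁻ ξ in Ici a, ENNReal.ofReal ξ⁻¹ = ⊤ := by
  by_contra h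
  refine not_integrableOn_Ici_inv (a := a)
    ⟨measurable_inv.aestronglyMeasurable, (hasFiniteIntegral_iff_ofReal ?_).2 (Ne.lt_top h)⟩
  filter_upwards [ae_restrict_mem measurableSet_Ici] with ξ (hξ : a ≤ ξ)
  exact inv_nonneg.2 (ha.le.trans hξ)

theorem lintegral_inv_sqrt_eq_top_of_le_mul_sq {I : ℝ → ℝ} {a C : ℝ} (ha : 0 < a)
    (hI : ∀ ξ ∈ Ici a, 0 < I ξ ∧ I ξ ≤ C * ξ ^ 2) :
    ∫⁻ ξ in Ici a, ENNReal.ofReal (√(I ξ))⁻¹ = ⊤ := by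
  obtain ⟨hIa_pos, hIa_le⟩ := hI a self_mem_Ici
  have hC : 0 < C := pos_of_mul_pos_left (hIa_pos.trans_le hIa_le) (sq_nonneg a)
  have hbound : ∀ ξ ∈ Ici a,
      ENNReal.ofReal (√C)⁻¹ * ENNReal.ofReal ξ⁻¹ ≤ ENNReal.ofReal (√(I ξ))⁻¹ := by
    intro ξ hξa
    have hξ : 0 < ξ := ha.trans_le hξa
    rw [← ENNReal.ofReal_mul (by positivity), ← mul_inv]
    refine ENNReal.ofReal_le_ofReal (inv_anti₀ (sqrt_pos.2 (hI ξ hξa).1) ?_)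
    calc √(I ξ) ≤ √(C * ξ ^ 2) := sqrt_le_sqrt (hI ξ hξa).2
      _ = √C * ξ := by rw [sqrt_mul hC.le, sqrt_sq hξ.le]
  refine eq_top_iff.2 (le_trans ?_ (setLIntegral_mono' measurableSet_Ici hbound))
  rw [lintegral_const_mul _ measurable_inv.ennreal_ofReal, lintegral_Ici_ofReal_inv_eq_top ha,
    ENNReal.mul_top (by simpa using hC)]

theorem exp_neg_mul_sub_one_add_mul_nonneg (l x : ℝ) : 0 ≤ exp (-l * x) - 1 + l * x := by
  linarith [add_one_le_exp (-l * x)]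

theorem exp_neg_mul_sub_one_add_mul_le {l x : ℝ} (h : 0 ≤ l * x) :
    exp (-l * x) - 1 + l * x ≤ l * x := by
  linarith [exp_le_one_iff.2 (by linarith : -l * x ≤ 0)]

theorem monotoneOn_exp_neg_mul_sub_one_add_mul {x : ℝ} (hx : 0 ≤ x) :
    MonotoneOn (fun l ↦ exp (-l * x) - 1 + l * x) (Ici 0) := by
  intro l (hl : 0 ≤ l) m _ hlm
  have hsplit : exp (-m * x) = exp (-l * x) * exp (-((m - l) * x)) := by
    rw [← exp_add]; congr 1; ring
  have hstep : 1 - (m - l) * x ≤ exp (-((m - l) * x)) := by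
    linarith [add_one_le_exp (-((m - l) * x))]
  have hle_one : exp (-l * x) ≤ 1 := exp_le_one_iff.2 (by nlinarith)
  have hgap : 0 ≤ (m - l) * x := mul_nonneg (sub_nonneg.2 hlm) hx
  show exp (-l * x) - 1 + l * x ≤ exp (-m * x) - 1 + m * x
  nlinarith [exp_pos (-l * x)]

section LevyMeasure

variable {ν : Measure ℝ}

theorem integrable_id_of_lintegral_min_ne_top (hν : ∀ᵐ x ∂ν, 0 ≤ x)
    (hsmall : ∫⁻ x, ENNReal.ofReal (min x (x ^ 2)) ∂ν ≠ ⊤)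
    (hlarge : ∫⁻ x, ENNReal.ofReal (min x 1) ∂ν ≠ ⊤) :
    Integrable (fun x ↦ x) ν := by
  refine ⟨aestronglyMeasurable_id, (hasFiniteIntegral_iff_ofReal hν).2 ?_⟩
  have hsplit : ∀ x : ℝ, ENNReal.ofReal x ≤
      ENNReal.ofReal (min x 1) + ENNReal.ofReal (min x (x ^ 2)) := by
    intro x
    rcases le_total x 1 with hx | hx
    · rw [min_eq_left hx]; exact le_self_add
    · rw [min_eq_left (by nlinarith : x ≤ x ^ 2)]; exact le_add_self
  calc ∫⁻ x, ENNReal.ofReal x ∂ν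
      ≤ ∫⁻ x, (ENNReal.ofReal (min x 1) + ENNReal.ofReal (min x (x ^ 2))) ∂ν :=
        lintegral_mono hsplit
    _ = ∫⁻ x, ENNReal.ofReal (min x 1) ∂ν + ∫⁻ x, ENNReal.ofReal (min x (x ^ 2)) ∂ν :=
        lintegral_add_left (by fun_prop) _
    _ < ⊤ := ENNReal.add_lt_top.2 ⟨hlarge.lt_top, hsmall.lt_top⟩

theorem integrable_exp_neg_mul_sub_one_add_mul (hν : ∀ᵐ x ∂ν, 0 ≤ x)
    (hid : Integrable (fun x ↦ x) ν) {l : ℝ} (hl : 0 ≤ l) :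
    Integrable (fun x ↦ exp (-l * x) - 1 + l * x) ν := by
  refine (hid.const_mul l).mono' (by fun_prop) ?_
  filter_upwards [hν] with x hx
  rw [norm_of_nonneg (exp_neg_mul_sub_one_add_mul_nonneg l x)]
  exact exp_neg_mul_sub_one_add_mul_le (mul_nonneg hl hx)

theorem integral_exp_neg_mul_sub_one_add_mul_le (hν : ∀ᵐ x ∂ν, 0 ≤ x)
    (hid : Integrable (fun x ↦ x) ν) {l : ℝ} (hl : 0 ≤ l) :
    ∫ x, (exp (-l * x) - 1 + l * x) ∂ν ≤ l * ∫ x, x ∂ν := by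
  rw [← integral_const_mul]
  refine integral_mono_ae (integrable_exp_neg_mul_sub_one_add_mul hν hid hl)
    (hid.const_mul l) ?_
  filter_upwards [hν] with x hx using exp_neg_mul_sub_one_add_mul_le (mul_nonneg hl hx)

theorem monotoneOn_integral_exp_neg_mul_sub_one_add_mul (hν : ∀ᵐ x ∂ν, 0 ≤ x)
    (hid : Integrable (fun x ↦ x) ν) :
    MonotoneOn (fun l ↦ ∫ x, (exp (-l * x) - 1 + l * x) ∂ν) (Ici 0) := by
  intro l hl m hm hlm
  refine integral_mono_ae (integrable_exp_neg_mul_sub_one_add_mul hν hid hl)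
    (integrable_exp_neg_mul_sub_one_add_mul hν hid hm) ?_
  filter_upwards [hν] with x hx using monotoneOn_exp_neg_mul_sub_one_add_mul hx hl hm hlm

end LevyMeasure

theorem A3_fails_for_bounded_variation_general
    (α : ℝ)
    (ν : Measure ℝ) (hν0 : ν (Set.Iic 0) = 0)
    (hν : ∫⁻ x, ENNReal.ofReal (min x (x ^ 2)) ∂ν ≠ ⊤)
    (hνBV : ∫⁻ x, ENNReal.ofReal (min x 1) ∂ν ≠ ⊤)
    (ψ : ℝ → ℝ)
    (hψ : ∀ l : ℝ, ψ l = -α * l + ∫ x, (Real.exp (-l * x) - 1 + l * x) ∂ν)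
    (lstar : ℝ) (hlstar_pos : 0 < lstar)
    (hlstar_unique : ∀ l : ℝ, lstar < l → 0 < ψ l) :
    ∫⁻ ξ in Set.Ici (lstar + 1),
        ENNReal.ofReal ((Real.sqrt (∫ u in lstar..ξ, ψ u))⁻¹) = ⊤ := by
  have hν_nonneg : ∀ᵐ x ∂ν, 0 ≤ x :=
    measure_mono_null (fun x (hx : ¬0 ≤ x) ↦ (not_le.1 hx).le) hν0
  have hid := integrable_id_of_lintegral_min_ne_top hν_nonneg hν hνBV
  set K := |∫ x, x ∂ν - α|
  have hψ_le : ∀ u, 0 ≤ u → ψ u ≤ K * u := fun u hu ↦ by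
    rw [hψ]
    nlinarith [integral_exp_neg_mul_sub_one_add_mul_le hν_nonneg hid hu,
      le_abs_self (∫ x, x ∂ν - α)]
  have hψ_int : ∀ ξ, lstar ≤ ξ → IntervalIntegrable ψ volume lstar ξ := fun ξ hξ ↦ by
    rw [funext hψ]
    have hmono := monotoneOn_integral_exp_neg_mul_sub_one_add_mul hν_nonneg hid
    refine ((continuous_const.mul continuous_id).intervalIntegrable _ _).add
      (hmono.mono ?_).intervalIntegrable
    rw [uIcc_of_le hξ]
    exact (Icc_subset_Ici_iff hξ).2 hlstar_pos.le
  refine lintegral_inv_sqrt_eq_top_of_le_mul_sq (C := K) (by linarith)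
    fun ξ (hξ : _ ≤ ξ) ↦ ⟨?_, ?_⟩
  · exact intervalIntegral.intervalIntegral_pos_of_pos_on (hψ_int ξ (by linarith))
      (fun u hu ↦ hlstar_unique u hu.1) (by linarith)
  · calc ∫ u in lstar..ξ, ψ u ≤ ∫ u in lstar..ξ, K * u :=
          intervalIntegral.integral_mono_on (by linarith) (hψ_int ξ (by linarith))
            ((continuous_const_mul K).intervalIntegrable _ _)
            fun u hu ↦ hψ_le u (hlstar_pos.le.trans hu.1)
      _ = K * ((ξ ^ 2 - lstar ^ 2) / 2) := by
          rw [intervalIntegral.integral_const_mul, integral_id]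
      _ ≤ K * ξ ^ 2 := by gcongr; nlinarith

/-- For a branching mechanism with `β = 0` and
`∫ (x ∧ 1) ν(dx) < ∞` (bounded variation spectrally positive case), with
`ψ(λ) → ∞` and unique positive root `λ*`, condition (A3) fails:
`∫_{λ*+1}^∞ (∫_{λ*}^ξ ψ(u) du)^{-1/2} dξ = ∞`. -/
theorem A3_fails_for_bounded_variation
    (α : ℝ) (hα : 0 < α)
    (ν : Measure ℝ) (hν0 : ν (Set.Iic 0) = 0)
    (hν : ∫⁻ x, ENNReal.ofReal (min x (x ^ 2)) ∂ν ≠ ⊤)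
    (hνBV : ∫⁻ x, ENNReal.ofReal (min x 1) ∂ν ≠ ⊤)
    (ψ : ℝ → ℝ)
    (hψ : ∀ l : ℝ, ψ l = -α * l + ∫ x, (Real.exp (-l * x) - 1 + l * x) ∂ν)
    (hψ_top : Tendsto ψ atTop atTop)
    (lstar : ℝ) (hlstar_pos : 0 < lstar) (hlstar_root : ψ lstar = 0)
    (hlstar_unique : ∀ l : ℝ, lstar < l → 0 < ψ l) :
    ∫⁻ ξ in Set.Ici (lstar + 1),
        ENNReal.ofReal ((Real.sqrt (∫ u in lstar..ξ, ψ u))⁻¹) = ⊤ :=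
  A3_fails_for_bounded_variation_general α ν hν0 hν hνBV ψ hψ lstar hlstar_pos hlstar_unique
end
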